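/- The Gini uncertainty constant satisfies η_d ≤ ((d−1)/(d+1))·(√d/(1+√d)), where η_d = 2(d−1)/(d+1) − sup_ρ G_{XP}(ρ) and the supremum is over all density matrices ρ on ℂ^d. -/

import Mathlib

open Matrix BigOperators
open scoped ComplexOrder

noncomputable def omega (d : ℕ) : ℂ := Complex.exp (2 * Real.pi * Complex.I / d)

noncomputable def wpow (d : ℕ) [NeZero d] (x : ZMod d) : ℂ := omega d ^ x.val

noncomputable def Fmat (d : ℕ) [NeZero d] : Matrix (ZMod d) (ZMod d) ℂ :=
  Matrix.of fun r s => wpow d (r * s) / (Real.sqrt d : ℂ)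

noncomputable def Zmat (d : ℕ) [NeZero d] : Matrix (ZMod d) (ZMod d) ℂ :=
  Matrix.diagonal fun m => wpow d m

noncomputable def Xmat (d : ℕ) [NeZero d] : Matrix (ZMod d) (ZMod d) ℂ :=
  Matrix.of fun m n => if m = n + 1 then 1 else 0

noncomputable def Dmat (d : ℕ) [NeZero d] (a b : ZMod d) : Matrix (ZMod d) (ZMod d) ℂ :=
  wpow d (-((2 : ZMod d)⁻¹ * a * b)) • (Zmat d ^ a.val * Xmat d ^ b.val)

noncomputable def gini {n : Type*} [Fintype n] (p : n → ℝ) : ℝ :=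
  (1 / (2 * ((Fintype.card n : ℝ) + 1))) * ∑ r, ∑ s, |p r - p s|

noncomputable def outer {n : Type*} [Fintype n] (v : n → ℂ) : Matrix n n ℂ :=
  Matrix.vecMulVec v (star v)

noncomputable def probX (d : ℕ) [NeZero d] (ρ : Matrix (ZMod d) (ZMod d) ℂ) : ZMod d → ℝ :=
  fun r => (ρ r r).re

noncomputable def probP (d : ℕ) [NeZero d] (ρ : Matrix (ZMod d) (ZMod d) ℂ) : ZMod d → ℝ :=
  fun r => (((Fmat d)ᴴ * ρ * Fmat d) r r).re

noncomputable def giniX (d : ℕ) [NeZero d] (ρ : Matrix (ZMod d) (ZMod d) ℂ) : ℝ :=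
  gini (probX d ρ)

noncomputable def giniP (d : ℕ) [NeZero d] (ρ : Matrix (ZMod d) (ZMod d) ℂ) : ℝ :=
  gini (probP d ρ)

noncomputable def giniXP (d : ℕ) [NeZero d] (ρ : Matrix (ZMod d) (ZMod d) ℂ) : ℝ :=
  giniX d ρ + giniP d ρ

section helpers
variable (d : ℕ) [NeZero d]

lemma omega_pow_d : omega d ^ d = 1 := by
  have hd : (d:ℂ) ≠ 0 := Nat.cast_ne_zero.mpr (NeZero.ne d)
  rw [omega, ← Complex.exp_nat_mul,
    show (d:ℂ) * (2 * Real.pi * Complex.I / d) = 2 * Real.pi * Complex.I by field_simp]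
  exact Complex.exp_two_pi_mul_I

lemma wpow_zero : wpow d 0 = 1 := by simp [wpow]

lemma wpow_add (x y : ZMod d) : wpow d (x + y) = wpow d x * wpow d y := by
  have h : omega d ^ (x.val + y.val) = omega d ^ ((x.val + y.val) % d) :=
    pow_eq_pow_mod _ (omega_pow_d d)
  rw [wpow, wpow, wpow, ZMod.val_add, ← h, pow_add]

lemma wpow_natCast_mul (n : ℕ) (r : ZMod d) : wpow d ((n : ZMod d) * r) = wpow d r ^ n := by
  induction n with
  | zero => simp [wpow_zero]
  | succ k ih =>
    push_cast
    rw [add_mul, one_mul, wpow_add, ih, pow_succ]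

lemma wpow_abs (x : ZMod d) : ‖wpow d x‖ = 1 := by
  have : ‖omega d‖ = 1 := by
    rw [omega, show 2 * (Real.pi:ℂ) * Complex.I / d = ((2 * Real.pi / d : ℝ) : ℂ) * Complex.I by
      push_cast; ring, Complex.norm_exp_ofReal_mul_I]
  rw [wpow, norm_pow, this, one_pow]

lemma wpow_ne_zero (x : ZMod d) : wpow d x ≠ 0 := by
  intro hc
  have := wpow_abs d x
  rw [hc] at this; simp at this

lemma wpow_star (x : ZMod d) : star (wpow d x) = wpow d (-x) := by
  have h1 : wpow d (-x) * wpow d x = 1 := by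
    rw [← wpow_add]; simp [wpow_zero]
  have h2 : star (wpow d x) * wpow d x = 1 := by
    rw [Complex.star_def, mul_comm, Complex.mul_conj]
    norm_cast
    rw [← Complex.sq_norm, wpow_abs, one_pow]
  exact mul_right_cancel₀ (wpow_ne_zero d x) (h2.trans h1.symm)

lemma sum_wpow (r : ZMod d) : ∑ a : ZMod d, wpow d (a * r) = if r = 0 then (d:ℂ) else 0 := by
  by_cases h : r = 0
  · simp [h, wpow_zero, Finset.card_univ, ZMod.card]
  · simp only [h, if_false]
    have hval : ∀ a : ZMod d, wpow d (a * r) = wpow d r ^ a.val := by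
      intro a
      conv_lhs => rw [← ZMod.natCast_rightInverse a]
      rw [wpow_natCast_mul]
    rw [Finset.sum_congr rfl (fun a _ => hval a)]
    have hbij : ∑ a : ZMod d, wpow d r ^ a.val = ∑ i ∈ Finset.range d, wpow d r ^ i := by
      refine Finset.sum_nbij' (fun a => a.val) (fun i => (i : ZMod d)) ?_ ?_ ?_ ?_ ?_ <;>
        intro a ha
      · exact Finset.mem_range.mpr (ZMod.val_lt a)
      · exact Finset.mem_univ _
      · exact ZMod.natCast_rightInverse a
      · exact ZMod.val_cast_of_lt (Finset.mem_range.mp ha)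
      · rfl
    have hζ1 : wpow d r ≠ 1 := by
      rw [wpow]
      exact (Complex.isPrimitiveRoot_exp d (NeZero.ne d)).pow_ne_one_of_pos_of_lt
        (fun hh => h ((ZMod.val_eq_zero r).mp hh)) (ZMod.val_lt r)
    have hζd : wpow d r ^ d = 1 := by
      rw [wpow, ← pow_mul, mul_comm, pow_mul, omega_pow_d, one_pow]
    rw [hbij, geom_sum_eq hζ1, hζd, sub_self, zero_div]

end helpers

section helpers2
variable (d : ℕ) [NeZero d]

lemma sqrtd_ne_zero : ((Real.sqrt d : ℝ) : ℂ) ≠ 0 := by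
  have : (0:ℝ) < Real.sqrt d := Real.sqrt_pos.mpr (by exact_mod_cast Nat.pos_of_ne_zero (NeZero.ne d))
  exact_mod_cast ne_of_gt this

lemma FFH : Fmat d * (Fmat d)ᴴ = 1 := by
  have hd : (d:ℂ) ≠ 0 := Nat.cast_ne_zero.mpr (NeZero.ne d)
  ext r t
  simp only [Matrix.mul_apply, Fmat, Matrix.conjTranspose_apply, Matrix.of_apply]
  have hterm : ∀ a : ZMod d, wpow d (r * a) / (Real.sqrt d : ℂ) *
      star (wpow d (t * a) / (Real.sqrt d : ℂ)) = wpow d (a * (r - t)) / d := by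
    intro a
    rw [star_div₀, wpow_star, Complex.star_def, Complex.conj_ofReal]
    rw [div_mul_div_comm, ← wpow_add]
    congr 1
    · congr 1; ring
    · rw [← Complex.ofReal_mul, ← Real.sqrt_mul_self (by positivity : (0:ℝ) ≤ (d:ℝ))]
      norm_num
  rw [Finset.sum_congr rfl (fun a _ => hterm a), ← Finset.sum_div, sum_wpow]
  by_cases h : r = t
  · simp [h, Matrix.one_apply, sub_self, hd]
  · have : ¬ (r - t = 0) := sub_ne_zero.mpr h
    simp [this, Matrix.one_apply, h]

lemma sum_ite_zmod (A B : ℝ) :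
    ∑ j : ZMod d, (if j = 0 then A else B) = (d:ℝ) * B + (A - B) := by
  have h : ∀ j : ZMod d, (if j = 0 then A else B) = B + (if j = 0 then A - B else 0) := by
    intro j; split <;> ring
  rw [Finset.sum_congr rfl (fun j _ => h j), Finset.sum_add_distrib, Finset.sum_const,
    Finset.sum_ite_eq' Finset.univ (0 : ZMod d) (fun _ => A - B)]
  simp [Finset.card_univ, ZMod.card, nsmul_eq_mul]

end helpers2

section helpers3
variable (d : ℕ) [NeZero d]

lemma gini_le_one (q : ZMod d → ℝ) (h0 : ∀ i, 0 ≤ q i) (h1 : ∑ i, q i = 1) :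
    gini q ≤ 1 := by
  have hsum : ∑ r : ZMod d, ∑ t : ZMod d, |q r - q t| ≤ 2 * d := by
    calc ∑ r : ZMod d, ∑ t : ZMod d, |q r - q t|
        ≤ ∑ r : ZMod d, ∑ t : ZMod d, (q r + q t) := by
          apply Finset.sum_le_sum; intro r _
          apply Finset.sum_le_sum; intro t _
          exact abs_le.mpr ⟨by linarith [h0 r, h0 t], by linarith [h0 r, h0 t]⟩
      _ = 2 * d := by
          simp only [Finset.sum_add_distrib, h1, Finset.sum_const, Finset.card_univ,
            ZMod.card, nsmul_eq_mul]
          rw [← Finset.mul_sum, h1]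
          ring
  have hc : (0:ℝ) ≤ 1 / (2 * ((Fintype.card (ZMod d) : ℝ) + 1)) := by positivity
  calc gini q ≤ (1 / (2 * ((Fintype.card (ZMod d) : ℝ) + 1))) * (2 * d) :=
        mul_le_mul_of_nonneg_left hsum hc
    _ ≤ 1 := by
        simp only [ZMod.card]
        rw [div_mul_eq_mul_div, one_mul, div_le_one (by positivity)]
        have h1d : (1:ℝ) ≤ (d:ℝ) := by exact_mod_cast Nat.pos_of_ne_zero (NeZero.ne d)
        linarith

lemma diag_nonneg {σ : Matrix (ZMod d) (ZMod d) ℂ} (h : σ.PosSemidef) (i : ZMod d) :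
    0 ≤ (σ i i).re := by
  have hdiag : (0:ℂ) ≤ σ i i := by
    have := h.dotProduct_mulVec_nonneg (Pi.single i 1)
    simpa [dotProduct, Matrix.mulVec, Pi.single_apply, Finset.sum_ite_eq,
      Finset.sum_ite_eq'] using this
  exact (Complex.le_def.mp hdiag).1

lemma diag_sum_one {σ : Matrix (ZMod d) (ZMod d) ℂ} (ht : σ.trace = 1) :
    ∑ i : ZMod d, (σ i i).re = 1 := by
  have := congrArg Complex.re ht
  simpa [Matrix.trace, Matrix.diag, Complex.re_sum] using this
end helpers3

section helpers4
variable (d : ℕ) [NeZero d]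

lemma giniX_le_one {σ : Matrix (ZMod d) (ZMod d) ℂ} (h : σ.PosSemidef) (ht : σ.trace = 1) :
    giniX d σ ≤ 1 :=
  gini_le_one d _ (fun i => diag_nonneg d h i) (diag_sum_one d ht)

lemma giniXP_le_two {σ : Matrix (ZMod d) (ZMod d) ℂ} (h : σ.PosSemidef) (ht : σ.trace = 1) :
    giniXP d σ ≤ 2 := by
  have h1 : giniX d σ ≤ 1 := giniX_le_one d h ht
  have hpsd' : ((Fmat d)ᴴ * σ * Fmat d).PosSemidef := h.conjTranspose_mul_mul_same (Fmat d)
  have htr' : ((Fmat d)ᴴ * σ * Fmat d).trace = 1 := by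
    rw [Matrix.trace_mul_cycle, FFH, Matrix.one_mul, ht]
  have h2 : giniP d σ ≤ 1 := by
    have : giniP d σ = giniX d ((Fmat d)ᴴ * σ * Fmat d) := rfl
    rw [this]
    exact giniX_le_one d hpsd' htr'
  rw [giniXP]; linarith

lemma outer_isHermitian (v : ZMod d → ℂ) : (outer v).IsHermitian := by
  ext i j
  simp [outer, Matrix.conjTranspose_apply, Matrix.vecMulVec_apply, mul_comm]

lemma outer_posSemidef (v : ZMod d → ℂ) : (outer v).PosSemidef := by
  refine PosSemidef.of_dotProduct_mulVec_nonneg (outer_isHermitian d v) (fun y => ?_)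
  have hexp : dotProduct (star y) ((outer v) *ᵥ y)
      = star (dotProduct (star v) y) * dotProduct (star v) y := by
    simp only [dotProduct, Matrix.mulVec, Matrix.vecMulVec_apply, Pi.star_apply,
      outer, star_sum, star_mul', star_star, Finset.mul_sum, Finset.sum_mul]
    rw [Finset.sum_comm]
    apply Finset.sum_congr rfl; intro i _
    apply Finset.sum_congr rfl; intro j _
    ring
  rw [hexp]
  exact star_mul_self_nonneg _

end helpers4

theorem eta_upper_bound (d : ℕ) [NeZero d] (hodd : Odd d) :
    2 * ((d : ℝ) - 1) / ((d : ℝ) + 1) -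
      sSup {x | ∃ ρ : Matrix (ZMod d) (ZMod d) ℂ,
        ρ.PosSemidef ∧ ρ.trace = 1 ∧ x = giniXP d ρ}
    ≤ (((d : ℝ) - 1) / ((d : ℝ) + 1)) * (Real.sqrt d / (1 + Real.sqrt d)) := by
  have hd1 : 0 < d := Nat.pos_of_ne_zero (NeZero.ne d)
  have hdR : (1:ℝ) ≤ (d:ℝ) := by exact_mod_cast hd1
  set s : ℝ := Real.sqrt d with hs_def
  have hs2 : s ^ 2 = (d:ℝ) := Real.sq_sqrt (by positivity)
  have hsnn : 0 ≤ s := Real.sqrt_nonneg _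
  have hs1 : 1 ≤ s := by nlinarith
  have hs0 : 0 < s := by linarith
  set N : ℝ := 2 * s * (s + 1) with hN_def
  have hN0 : 0 < N := by positivity
  have hNval : (1 + s) ^ 2 + ((d:ℝ) - 1) = N := by nlinarith
  set rt : ℝ := Real.sqrt N with hrt_def
  have hrtm : rt * rt = N := Real.mul_self_sqrt hN0.le
  have hrt0 : 0 < rt := Real.sqrt_pos.mpr hN0
  set x : ZMod d → ℝ := fun j => (if j = 0 then 1 + s else 1) / rt with hx_def
  set v : ZMod d → ℂ := fun j => ((x j : ℝ) : ℂ) with hv_def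
  set ρ : Matrix (ZMod d) (ZMod d) ℂ := outer v with hρ_def
  set p : ZMod d → ℝ := fun r => (if r = 0 then (1 + s) ^ 2 else 1) / N with hp_def
  -- diagonal entries
  have hxp : ∀ j : ZMod d, x j * x j = p j := by
    intro j
    by_cases h : j = 0 <;> simp only [hx_def, hp_def, h, if_true, if_false] <;>
      rw [div_mul_div_comm, hrtm] <;> ring
  have hvv : ∀ j : ZMod d, v j * star (v j) = ((p j : ℝ) : ℂ) := by
    intro j
    simp only [hv_def]
    rw [Complex.star_def, Complex.conj_ofReal, ← Complex.ofReal_mul, hxp j]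
  have hre : ∀ j : ZMod d, (v j * star (v j)).re = p j := by
    intro j; rw [hvv j]; simp
  -- positive semidefinite
  have hpsd : ρ.PosSemidef := outer_posSemidef d v
  -- trace one
  have hx2 : ∑ j : ZMod d, p j = 1 := by
    have hpj : ∀ j : ZMod d, p j = if j = 0 then (1+s)^2/N else 1/N := by
      intro j; by_cases h : j = 0 <;> simp [hp_def, h]
    rw [Finset.sum_congr rfl (fun j _ => hpj j), sum_ite_zmod]
    field_simp
    linarith [hNval]
  have htr : ρ.trace = 1 := by
    have h1 : ρ.trace = ((∑ j : ZMod d, p j : ℝ) : ℂ) := by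
      rw [hρ_def, Matrix.trace]
      push_cast
      apply Finset.sum_congr rfl; intro j _
      rw [Matrix.diag]
      simp only [outer, Matrix.vecMulVec_apply, Pi.star_apply]
      exact hvv j
    rw [h1, hx2]; norm_num
  -- probX
  have hprobX : probX d ρ = p := by
    funext r
    rw [probX]
    simp only [hρ_def, outer, Matrix.vecMulVec_apply, Pi.star_apply]
    exact hre r
  -- the Fourier fixed point
  have hw : ∀ r : ZMod d, (∑ a : ZMod d, star (Fmat d a r) * v a) = v r := by
    intro r
    have hva : ∀ a : ZMod d, v a = ((1/rt : ℝ) : ℂ) + (if a = 0 then ((s/rt : ℝ) : ℂ) else 0) := by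
      intro a
      rw [hv_def]
      simp only [hx_def]
      split
      · push_cast; ring
      · push_cast; ring
    have hterm : ∀ a : ZMod d, star (Fmat d a r) * v a
        = (wpow d (a * (-r)) * (((1/rt : ℝ) : ℂ) + (if a = 0 then ((s/rt : ℝ) : ℂ) else 0)))
            / ((Real.sqrt d : ℝ) : ℂ) := by
      intro a
      rw [Fmat]
      simp only [Matrix.of_apply]
      rw [star_div₀, wpow_star, Complex.star_def, Complex.conj_ofReal, ← hva a]
      rw [div_mul_eq_mul_div]
      congr 2
      ring
    rw [Finset.sum_congr rfl (fun a _ => hterm a), ← Finset.sum_div]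
    have hsplit : ∑ a : ZMod d, wpow d (a * (-r)) *
        (((1/rt : ℝ) : ℂ) + (if a = 0 then ((s/rt : ℝ) : ℂ) else 0))
        = (∑ a : ZMod d, wpow d (a * (-r))) * ((1/rt : ℝ) : ℂ) + ((s/rt : ℝ) : ℂ) := by
      rw [Finset.sum_mul]
      simp only [mul_add]
      rw [Finset.sum_add_distrib]
      congr 1
      have : ∀ a : ZMod d, wpow d (a * (-r)) * (if a = 0 then ((s/rt : ℝ) : ℂ) else 0)
          = if a = 0 then ((s/rt : ℝ) : ℂ) else 0 := by
        intro a
        by_cases h : a = 0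
        · simp [h, wpow_zero]
        · simp [h]
      rw [Finset.sum_congr rfl (fun a _ => this a),
        Finset.sum_ite_eq' Finset.univ (0 : ZMod d) (fun _ => ((s/rt : ℝ) : ℂ))]
      simp
    rw [hsplit, sum_wpow]
    rw [hv_def]
    simp only [hx_def]
    have hsd : ((d:ℝ):ℂ) = ((s^2 : ℝ) : ℂ) := by rw [hs2]
    by_cases h : r = 0
    · have : -r = 0 := by rw [h, neg_zero]
      rw [if_pos this, h, if_pos rfl]
      push_cast
      field_simp
      rw [← hs_def]
      exact_mod_cast (by rw [← hs2]; ring : ((d:ℝ) + s) = s * (1 + s))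
    · have : ¬ (-r = 0) := fun hc => h (by rwa [neg_eq_zero] at hc)
      rw [if_neg this, if_neg h]
      push_cast
      field_simp
      rw [← hs_def]
      ring
  -- probP
  have hFdiag : ∀ r : ZMod d, ((Fmat d)ᴴ * ρ * Fmat d) r r
      = (∑ a : ZMod d, star (Fmat d a r) * v a) * star (∑ a : ZMod d, star (Fmat d a r) * v a) := by
    intro r
    rw [star_sum, Finset.sum_mul_sum]
    simp only [Matrix.mul_apply, Matrix.conjTranspose_apply, hρ_def, outer,
      Matrix.vecMulVec_apply, Pi.star_apply, Finset.sum_mul, star_mul', star_star]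
    rw [Finset.sum_comm]
    apply Finset.sum_congr rfl; intro a _
    apply Finset.sum_congr rfl; intro b _
    ring
  have hprobP : probP d ρ = p := by
    funext r
    rw [probP, hFdiag r, hw r]
    exact hre r
  -- gini computation
  set C : ℝ := ((1+s)^2 - 1)/N with hC_def
  have hCnn : (0:ℝ) ≤ C := by
    rw [hC_def]; apply div_nonneg _ hN0.le; nlinarith
  have habs : ∀ r t : ZMod d, |p r - p t| =
      (if r = 0 then (if t = 0 then (0:ℝ) else C) else (if t = 0 then C else 0)) := by
    intro r t
    by_cases hr : r = 0 <;> by_cases ht : t = 0 <;>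
      simp only [hp_def, hr, ht, if_true, if_false, sub_self, abs_zero] <;>
      try rfl
    · rw [div_sub_div_same, ← hC_def]; exact abs_of_nonneg hCnn
    · rw [abs_sub_comm, div_sub_div_same, ← hC_def]; exact abs_of_nonneg hCnn
  have hkey : ∑ r : ZMod d, ∑ t : ZMod d, |p r - p t| = 2*((d:ℝ)-1)*C := by
    rw [Finset.sum_congr rfl (fun r _ => Finset.sum_congr rfl (fun t _ => habs r t))]
    have hrow : ∀ r : ZMod d,
        (∑ t : ZMod d, (if r = 0 then (if t = 0 then (0:ℝ) else C) else (if t = 0 then C else 0)))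
        = if r = 0 then ((d:ℝ)*C - C) else C := by
      intro r
      by_cases hr : r = 0
      · simp only [if_pos hr]; rw [sum_ite_zmod]; ring
      · simp only [if_neg hr]; rw [sum_ite_zmod]; ring
    rw [Finset.sum_congr rfl (fun r _ => hrow r), sum_ite_zmod]
    ring
  have hd1ne : ((d:ℝ)+1) ≠ 0 := by positivity
  have hgini : gini p = ((d:ℝ)-1)/((d:ℝ)+1) * C := by
    simp only [gini, ZMod.card]
    rw [hkey]
    field_simp
  have hgXP : giniXP d ρ = 2*(((d:ℝ)-1)/((d:ℝ)+1) * C) := by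
    simp only [giniXP, giniX, giniP]
    rw [hprobX, hprobP, hgini]; ring
  have hCval : C = (s+2)/(2*(s+1)) := by
    rw [hC_def, hN_def, div_eq_div_iff (by positivity) (by positivity)]; ring
  have hmem : giniXP d ρ ∈ {y | ∃ σ : Matrix (ZMod d) (ZMod d) ℂ,
      σ.PosSemidef ∧ σ.trace = 1 ∧ y = giniXP d σ} := ⟨ρ, hpsd, htr, rfl⟩
  have hbdd : BddAbove {y | ∃ σ : Matrix (ZMod d) (ZMod d) ℂ,
      σ.PosSemidef ∧ σ.trace = 1 ∧ y = giniXP d σ} := by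
    refine ⟨2, ?_⟩
    rintro y ⟨σ, h1, h2, rfl⟩
    exact giniXP_le_two d h1 h2
  have hsup := le_csSup hbdd hmem
  have hfin : 2*((d:ℝ)-1)/((d:ℝ)+1) - giniXP d ρ = (((d:ℝ)-1)/((d:ℝ)+1)) * (s/(1+s)) := by
    rw [hgXP, hCval]
    have h2 : (0:ℝ) < 1 + s := by linarith
    field_simp
    ring
  linarith [hsup, hfin]
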